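/- arXiv:2107.11338 — 3 statements merged into one kernel-verified Lean document; each statement's English description precedes it below -/
import Mathlib

section
/- Let n be a positive integer, x, y ∈ ℝⁿ, and let X, Y be symmetric n×n real matrices. Then X − x xᵀ and Y − y yᵀ are both positive semidefinite if and only if there exists an n×n real matrix Z such that the (2n+1)×(2n+1) block matrix M = [[1, xᵀ, yᵀ], [x, X, Z], [y, Zᵀ, Y]] is positive semidefinite. -/
/-!
Taking the Schur complement of the pivot `1`, the arrow matrix is positive semidefinite iff
`[[X - x xᵀ, Z - x yᵀ], [Zᵀ - y xᵀ, Y - y yᵀ]]` is. The diagonal blocks of a positive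
semidefinite matrix are positive semidefinite, and the choice `Z = x yᵀ` makes this matrix
block diagonal.
-/

open Matrix

/-- The `(2n+1) × (2n+1)` arrow matrix `[[1, xᵀ, yᵀ], [x, X, Z], [y, Zᵀ, Y]]`,
indexed by `Unit ⊕ (Fin n ⊕ Fin n)`. -/
def arrowMat (n : ℕ) (x y : Fin n → ℝ) (X Y Z : Matrix (Fin n) (Fin n) ℝ) :
    Matrix (Unit ⊕ (Fin n ⊕ Fin n)) (Unit ⊕ (Fin n ⊕ Fin n)) ℝ :=
  fun i j =>
    match i, j with
    | Sum.inl _, Sum.inl _ => 1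
    | Sum.inl _, Sum.inr (Sum.inl k) => x k
    | Sum.inl _, Sum.inr (Sum.inr k) => y k
    | Sum.inr (Sum.inl k), Sum.inl _ => x k
    | Sum.inr (Sum.inl k), Sum.inr (Sum.inl l) => X k l
    | Sum.inr (Sum.inl k), Sum.inr (Sum.inr l) => Z k l
    | Sum.inr (Sum.inr k), Sum.inl _ => y k
    | Sum.inr (Sum.inr k), Sum.inr (Sum.inl l) => Z l k
    | Sum.inr (Sum.inr k), Sum.inr (Sum.inr l) => Y k l

namespace Matrix

variable {l m n o α : Type*}

theorem fromBlocks_sub [Sub α] (A : Matrix n l α) (B : Matrix n m α) (C : Matrix o l α)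
    (D : Matrix o m α) (A' : Matrix n l α) (B' : Matrix n m α) (C' : Matrix o l α)
    (D' : Matrix o m α) :
    fromBlocks A B C D - fromBlocks A' B' C' D' =
      fromBlocks (A - A') (B - B') (C - C') (D - D') := by
  ext (i | i) (j | j) <;> rfl

theorem vecMulVec_sumElim [Mul α] (a : n → α) (b : o → α) (c : l → α) (d : m → α) :
    vecMulVec (Sum.elim a b) (Sum.elim c d) =
      fromBlocks (vecMulVec a c) (vecMulVec a d) (vecMulVec b c) (vecMulVec b d) := by
  ext (i | i) (j | j) <;> rfl

variable {R : Type*} [CommRing R] [PartialOrder R] [StarRing R] [StarOrderedRing R]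

theorem PosSemidef.fromBlocks_zero [Fintype m] [Fintype n] {A : Matrix m m R}
    {D : Matrix n n R} (hA : A.PosSemidef) (hD : D.PosSemidef) :
    (fromBlocks A 0 0 D).PosSemidef := by
  refine .of_dotProduct_mulVec_nonneg ?_ fun v => ?_
  · simp [IsHermitian, fromBlocks_conjTranspose, hA.isHermitian.eq, hD.isHermitian.eq]
  · rw [dotProduct_block, fromBlocks_mulVec]
    simp only [zero_mulVec, add_zero, zero_add, Sum.elim_comp_inl, Sum.elim_comp_inr]
    exact add_nonneg (hA.dotProduct_mulVec_nonneg (v ∘ Sum.inl))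
      (hD.dotProduct_mulVec_nonneg (v ∘ Sum.inr))

theorem posSemidef_fromBlocks_one_iff [NoZeroDivisors R] [Fintype m]
    (v : m → R) (D : Matrix m m R) :
    (fromBlocks (1 : Matrix Unit Unit R) (replicateRow Unit v) (replicateCol Unit (star v))
      D).PosSemidef ↔ (D - vecMulVec (star v) v).PosSemidef := by
  have := invertibleOne (α := Matrix Unit Unit R)
  rw [← conjTranspose_replicateRow, PosDef.fromBlocks₁₁ _ _ PosDef.one, inv_one, Matrix.mul_one,
    conjTranspose_replicateRow, vecMulVec_eq Unit]

end Matrix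

theorem arrowMat_eq_fromBlocks (n : ℕ) (x y : Fin n → ℝ) (X Y Z : Matrix (Fin n) (Fin n) ℝ) :
    arrowMat n x y X Y Z = fromBlocks 1 (replicateRow Unit (Sum.elim x y))
      (replicateCol Unit (star (Sum.elim x y))) (fromBlocks X Z Zᵀ Y) := by
  ext (_ | i | i) (_ | j | j) <;> rfl

theorem arrowMat_posSemidef_iff (n : ℕ) (x y : Fin n → ℝ) (X Y Z : Matrix (Fin n) (Fin n) ℝ) :
    (arrowMat n x y X Y Z).PosSemidef ↔ (fromBlocks (X - vecMulVec x x) (Z - vecMulVec x y)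
      (Zᵀ - vecMulVec y x) (Y - vecMulVec y y)).PosSemidef := by
  rw [arrowMat_eq_fromBlocks, posSemidef_fromBlocks_one_iff, star_trivial, vecMulVec_sumElim,
    fromBlocks_sub]

theorem schur_arrow_iff_general (n : ℕ) (x y : Fin n → ℝ)
    (X Y : Matrix (Fin n) (Fin n) ℝ) :
    ((X - vecMulVec x x).PosSemidef ∧ (Y - vecMulVec y y).PosSemidef) ↔
      ∃ Z : Matrix (Fin n) (Fin n) ℝ, (arrowMat n x y X Y Z).PosSemidef := by
  simp only [arrowMat_posSemidef_iff]
  constructor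
  · rintro ⟨hx, hy⟩
    refine ⟨vecMulVec x y, ?_⟩
    rw [transpose_vecMulVec, sub_self, sub_self]
    exact hx.fromBlocks_zero hy
  · rintro ⟨Z, hM⟩
    exact ⟨hM.submatrix Sum.inl, hM.submatrix Sum.inr⟩

theorem schur_arrow_iff (n : ℕ) (hn : 0 < n) (x y : Fin n → ℝ)
    (X Y : Matrix (Fin n) (Fin n) ℝ) (hX : X.IsSymm) (hY : Y.IsSymm) :
    ((X - vecMulVec x x).PosSemidef ∧ (Y - vecMulVec y y).PosSemidef) ↔
      ∃ Z : Matrix (Fin n) (Fin n) ℝ, (arrowMat n x y X Y Z).PosSemidef :=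
  schur_arrow_iff_general n x y X Y
end

section
/- Let n be a positive integer, x, y ∈ ℝⁿ, and let X, Y be symmetric n×n real matrices with X − x xᵀ and Y − y yᵀ positive semidefinite. Then the (2n+1)×(2n+1) block matrix M = [[1, xᵀ, yᵀ], [x, X, x yᵀ], [y, y xᵀ, Y]], obtained by choosing Z = x yᵀ, is positive semidefinite. -/
open Matrix

/-- Inclusion matrix for an injective map. -/
def inclMat {m k : Type*} [DecidableEq k] (f : m → k) : Matrix k m ℝ :=
  fun i j => if i = f j then 1 else 0

lemma inclMat_mul_mul {m k : Type*} [Fintype m] [DecidableEq k]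
    (f : m → k) (A : Matrix m m ℝ) (i j : k) :
    (inclMat f * A * (inclMat f)ᴴ) i j =
      ∑ a : m, ∑ b : m, (if i = f a then 1 else 0) * A a b * (if j = f b then 1 else 0) := by
  simp only [Matrix.mul_apply, inclMat, conjTranspose_apply, star_trivial, Finset.sum_mul]
  rw [Finset.sum_comm]

theorem arrow_posSemidef_of_schur (n : ℕ) (hn : 0 < n) (x y : Fin n → ℝ)
    (X Y : Matrix (Fin n) (Fin n) ℝ) (hX : X.IsSymm) (hY : Y.IsSymm)
    (hXpsd : (X - vecMulVec x x).PosSemidef) (hYpsd : (Y - vecMulVec y y).PosSemidef) :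
    (arrowMat n x y X Y (vecMulVec x y)).PosSemidef := by
  set v : Unit ⊕ (Fin n ⊕ Fin n) → ℝ := Sum.elim (fun _ => 1) (Sum.elim x y) with hv
  set P : Matrix (Unit ⊕ (Fin n ⊕ Fin n)) (Fin n) ℝ :=
    inclMat (fun k => Sum.inr (Sum.inl k)) with hP
  set Q : Matrix (Unit ⊕ (Fin n ⊕ Fin n)) (Fin n) ℝ :=
    inclMat (fun k => Sum.inr (Sum.inr k)) with hQ
  have hdecomp : arrowMat n x y X Y (vecMulVec x y) =
      vecMulVec v v + (P * (X - vecMulVec x x) * Pᴴ + Q * (Y - vecMulVec y y) * Qᴴ) := by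
    ext i j
    simp only [Matrix.add_apply, hP, hQ, inclMat_mul_mul]
    rcases i with _ | (k | k) <;> rcases j with _ | (l | l) <;>
      simp [arrowMat, vecMulVec_apply, hv, Finset.sum_ite_eq, mul_comm] <;> ring
  rw [hdecomp]
  refine Matrix.PosSemidef.add ?_ (Matrix.PosSemidef.add ?_ ?_)
  · have : vecMulVec v v = Matrix.replicateCol Unit v * (1 : Matrix Unit Unit ℝ) * (Matrix.replicateCol Unit v)ᴴ := by
      rw [Matrix.mul_one, Matrix.conjTranspose_replicateCol, star_trivial, Matrix.vecMulVec_eq Unit]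
    rw [this]
    exact Matrix.PosSemidef.one.mul_mul_conjTranspose_same _
  · exact hXpsd.mul_mul_conjTranspose_same P
  · exact hYpsd.mul_mul_conjTranspose_same Q
end

section
/- Let n be a positive integer, ℵ a natural number with ℵ ≤ n, and x ∈ ℝⁿ. Then the number of nonzero components of x is at most ℵ if and only if there exists y ∈ {0,1}ⁿ such that x_i y_i = 0 for all i ∈ [n] and ∑_{i=1}^n y_i ≥ n − ℵ. -/
open Finset

theorem card_le_iff_exists_complementary_binary (n : ℕ) (hn : 0 < n) (ℵ : ℕ) (hℵ : ℵ ≤ n)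
    (x : Fin n → ℝ) :
    (Finset.univ.filter fun i => x i ≠ 0).card ≤ ℵ ↔
      ∃ y : Fin n → ℝ, (∀ i, y i = 0 ∨ y i = 1) ∧ (∀ i, x i * y i = 0) ∧
        (n : ℝ) - (ℵ : ℝ) ≤ ∑ i, y i := by
  have hsplit : (Finset.univ.filter fun i => x i ≠ 0).card
      + (Finset.univ.filter fun i => x i = 0).card = n := by
    classical
    have := Finset.card_filter_add_card_filter_not (s := Finset.univ)
      (p := fun i => x i ≠ 0)
    simpa [not_not] using this
  constructor
  · intro h
    refine ⟨fun i => if x i = 0 then 1 else 0, fun i => ?_, fun i => ?_, ?_⟩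
    · by_cases hx : x i = 0 <;> simp [hx]
    · by_cases hx : x i = 0 <;> simp [hx]
    · have : ∑ i, (if x i = 0 then (1:ℝ) else 0)
          = ((Finset.univ.filter fun i => x i = 0).card : ℝ) := by
        rw [Finset.sum_boole]
      rw [this]
      have : (n : ℝ) - ℵ ≤ ((Finset.univ.filter fun i => x i = 0).card : ℝ) := by
        have h1 : n - ℵ ≤ (Finset.univ.filter fun i => x i = 0).card := by omega
        have h2 := Nat.cast_le (α := ℝ) |>.2 h1
        rw [Nat.cast_sub hℵ] at h2
        exact h2
      exact this
  · rintro ⟨y, hy01, hxy, hsum⟩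
    have hle : ∑ i, y i ≤ ((Finset.univ.filter fun i => x i = 0).card : ℝ) := by
      rw [Finset.card_filter]
      push_cast
      apply Finset.sum_le_sum
      intro i _
      rcases hy01 i with h0 | h1
      · rw [h0]; positivity
      · have hx : x i = 0 := by
          have := hxy i; rw [h1, mul_one] at this; exact this
        simp [hx, h1]
    have : (n : ℝ) - ℵ ≤ ((Finset.univ.filter fun i => x i = 0).card : ℝ) :=
      le_trans hsum hle
    have hnat : n - ℵ ≤ (Finset.univ.filter fun i => x i = 0).card := by
      have h2 : (↑(n - ℵ) : ℝ) ≤ ((Finset.univ.filter fun i => x i = 0).card : ℝ) := by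
        push_cast [Nat.cast_sub hℵ]; linarith
      exact_mod_cast h2
    omega
end
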